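/- Let λ > 0 and K > λ·G(1)·H(1), let (u_n, v_n) be the sequence produced by the monotone iteration scheme starting from (u₁, v₁) = (−u₀, −v₀), and let (u₋, v₋) be any lower solution of (S_λ). Then for every n ≥ 1 and every x ∈ V one has u₋(x) < u_n(x) and v₋(x) < v_n(x). -/

import Mathlib

open Real Finset

/-- The μ-Laplacian on a finite weighted graph. -/
noncomputable def graphLap {V : Type*} [Fintype V] (ω : V → V → ℝ) (μ : V → ℝ)
    (f : V → ℝ) (x : V) : ℝ :=
  (1 / μ x) * ∑ y, ω x y * (f y - f x)

/-- The integral of `f` over `V` with respect to the measure `μ`. -/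
noncomputable def graphInt {V : Type*} [Fintype V] (μ : V → ℝ) (f : V → ℝ) : ℝ :=
  ∑ x, μ x * f x

/-- The total volume `|V|` of the graph. -/
noncomputable def graphVol {V : Type*} [Fintype V] (μ : V → ℝ) : ℝ :=
  ∑ x, μ x

/-- The Dirac delta mass at vertex `p`. -/
noncomputable def diracDelta {V : Type*} [DecidableEq V] (μ : V → ℝ) (p x : V) : ℝ :=
  if x = p then 1 / μ p else 0

/-- `primFun F t = ∫_{√t}^{1} 2 s F(s²) ds`; this gives `g` from `G` and `h` from `H`. -/
noncomputable def primFun (F : ℝ → ℝ) (t : ℝ) : ℝ :=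
  ∫ s in Real.sqrt t..(1 : ℝ), 2 * s * F (s ^ 2)

/-- The pointwise squared gradient `|∇ f|²(x)`. -/
noncomputable def gradSq {V : Type*} [Fintype V] (ω : V → V → ℝ) (μ : V → ℝ)
    (f : V → ℝ) (x : V) : ℝ :=
  (1 / (2 * μ x)) * ∑ y, ω x y * (f y - f x) ^ 2

/-- The gradient norm `‖∇ f‖₂ = (∫_V |∇ f|² dμ)^{1/2}`. -/
noncomputable def gradNorm {V : Type*} [Fintype V] (ω : V → V → ℝ) (μ : V → ℝ)
    (f : V → ℝ) : ℝ :=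
  Real.sqrt (graphInt μ (gradSq ω μ f))

/-- The mean value `f̄ = (1/|V|) ∫_V f dμ`. -/
noncomputable def graphAvg {V : Type*} [Fintype V] (μ : V → ℝ) (f : V → ℝ) : ℝ :=
  (1 / graphVol μ) * graphInt μ f

/-- The `W^{1,2}(V)` norm, `(∫_V (|∇ f|² + f²) dμ)^{1/2}`. -/
noncomputable def sobolevNorm {V : Type*} [Fintype V] (ω : V → V → ℝ) (μ : V → ℝ)
    (f : V → ℝ) : ℝ :=
  Real.sqrt (graphInt μ (fun x => gradSq ω μ f x + f x ^ 2))

/-- `(u, v)` is a solution of the system `(S_λ)`. -/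
def isSolution {V : Type*} [Fintype V] (ω : V → V → ℝ) (μ : V → ℝ)
    (G H : ℝ → ℝ) (N1 N2 : ℕ) (u₀ v₀ : V → ℝ) (lam : ℝ) (u v : V → ℝ) : Prop :=
  ∀ x, graphLap ω μ u x =
      -lam * Real.exp (v₀ x + v x) * H (Real.exp (v₀ x + v x)) *
        primFun G (Real.exp (u₀ x + u x)) + 4 * Real.pi * N1 / graphVol μ ∧
    graphLap ω μ v x =
      -lam * Real.exp (u₀ x + u x) * G (Real.exp (u₀ x + u x)) *
        primFun H (Real.exp (v₀ x + v x)) + 4 * Real.pi * N2 / graphVol μ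

/-- `(u, v)` is a lower solution of the system `(S_λ)`. -/
def isLowerSolution {V : Type*} [Fintype V] (ω : V → V → ℝ) (μ : V → ℝ)
    (G H : ℝ → ℝ) (N1 N2 : ℕ) (u₀ v₀ : V → ℝ) (lam : ℝ) (u v : V → ℝ) : Prop :=
  ∀ x, graphLap ω μ u x ≥
      -lam * Real.exp (v₀ x + v x) * H (Real.exp (v₀ x + v x)) *
        primFun G (Real.exp (u₀ x + u x)) + 4 * Real.pi * N1 / graphVol μ ∧
    graphLap ω μ v x ≥
      -lam * Real.exp (u₀ x + u x) * G (Real.exp (u₀ x + u x)) *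
        primFun H (Real.exp (v₀ x + v x)) + 4 * Real.pi * N2 / graphVol μ

/-- `(uM, vM)` is a maximal solution of `(S_λ)`: it solves the system and any other
solution lies strictly below it. -/
def isMaximalSolution {V : Type*} [Fintype V] (ω : V → V → ℝ) (μ : V → ℝ)
    (G H : ℝ → ℝ) (N1 N2 : ℕ) (u₀ v₀ : V → ℝ) (lam : ℝ) (uM vM : V → ℝ) : Prop :=
  isSolution ω μ G H N1 N2 u₀ v₀ lam uM vM ∧
    ∀ u' v', isSolution ω μ G H N1 N2 u₀ v₀ lam u' v' → (u', v') ≠ (uM, vM) →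
      ∀ x, u' x < uM x ∧ v' x < vM x


section Helpers

lemma graphLap_add {V : Type*} [Fintype V] (ω : V → V → ℝ) (μ : V → ℝ) (f g : V → ℝ) (x : V) :
    graphLap ω μ (fun y => f y + g y) x = graphLap ω μ f x + graphLap ω μ g x := by
  simp only [graphLap, ← mul_add, ← Finset.sum_add_distrib]
  congr 1; apply Finset.sum_congr rfl; intro y _; ring

lemma graphLap_sub {V : Type*} [Fintype V] (ω : V → V → ℝ) (μ : V → ℝ) (f g : V → ℝ) (x : V) :
    graphLap ω μ (fun y => f y - g y) x = graphLap ω μ f x - graphLap ω μ g x := by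
  simp only [graphLap, ← mul_sub, ← Finset.sum_sub_distrib]
  congr 1; apply Finset.sum_congr rfl; intro y _; ring

lemma graphLap_nonpos_at_max {V : Type*} [Fintype V] {ω : V → V → ℝ} {μ : V → ℝ}
    (hω : ∀ x y, 0 ≤ ω x y) (hμ : ∀ x, 0 < μ x) (w : V → ℝ) (x₀ : V)
    (hmax : ∀ y, w y ≤ w x₀) : graphLap ω μ w x₀ ≤ 0 := by
  have h1 : (0:ℝ) ≤ 1 / μ x₀ := le_of_lt (by have := hμ x₀; positivity)
  have h2 : ∑ y, ω x₀ y * (w y - w x₀) ≤ 0 := by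
    apply Finset.sum_nonpos
    intro y _
    exact mul_nonpos_of_nonneg_of_nonpos (hω x₀ y) (by linarith [hmax y])
  exact mul_nonpos_of_nonneg_of_nonpos h1 h2

lemma exp_lip {a b : ℝ} (hab : a ≤ b) (hb : b ≤ 0) :
    Real.exp b - Real.exp a ≤ b - a := by
  have h1 := Real.add_one_le_exp (a - b)
  have h2 : Real.exp b ≤ 1 := Real.exp_le_one_iff.mpr hb
  have h3 := Real.exp_pos b
  have h4 : Real.exp a = Real.exp (a - b) * Real.exp b := by
    rw [← Real.exp_add]; ring_nf
  nlinarith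

lemma exists_max {V : Type*} [Fintype V] [Nonempty V] (w : V → ℝ) :
    ∃ x₀ : V, ∀ y, w y ≤ w x₀ := by
  obtain ⟨x₀, -, h⟩ := Finset.exists_max_image Finset.univ w
    ⟨Classical.arbitrary V, Finset.mem_univ _⟩
  exact ⟨x₀, fun y => h y (Finset.mem_univ y)⟩

lemma maxpr_strict {V : Type*} [Fintype V] [Nonempty V] {ω : V → V → ℝ} {μ : V → ℝ}
    (hω : ∀ x y, 0 ≤ ω x y) (hμ : ∀ x, 0 < μ x) {K : ℝ} (hK : 0 < K) (w : V → ℝ)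
    (h : ∀ x, 0 < graphLap ω μ w x - K * w x) : ∀ x, w x < 0 := by
  obtain ⟨x₀, hmax⟩ := exists_max w
  have h1 := graphLap_nonpos_at_max hω hμ w x₀ hmax
  have h2 := h x₀
  intro x
  have : w x₀ < 0 := by nlinarith
  exact lt_of_le_of_lt (hmax x) this

lemma maxpr_weak {V : Type*} [Fintype V] [Nonempty V] {ω : V → V → ℝ} {μ : V → ℝ}
    (hω : ∀ x y, 0 ≤ ω x y) (hμ : ∀ x, 0 < μ x) {K : ℝ} (hK : 0 < K) (w : V → ℝ)
    (h : ∀ x, 0 ≤ graphLap ω μ w x - K * w x) : ∀ x, w x ≤ 0 := by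
  obtain ⟨x₀, hmax⟩ := exists_max w
  have h1 := graphLap_nonpos_at_max hω hμ w x₀ hmax
  have h2 := h x₀
  intro x
  have : w x₀ ≤ 0 := by nlinarith
  exact le_trans (hmax x) this

lemma conn_reach {V : Type*} {ω : V → V → ℝ}
    (hconn : ∀ x y : V, x ≠ y → ∃ (n : ℕ) (c : Fin (n + 1) → V),
      c 0 = x ∧ c (Fin.last n) = y ∧ ∀ i : Fin n, 0 < ω (c i.castSucc) (c i.succ))
    (S : Set V) (hclosed : ∀ a ∈ S, ∀ b, 0 < ω a b → b ∈ S) {x : V} (hx : x ∈ S) :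
    ∀ y, y ∈ S := by
  intro y
  by_cases hxy : x = y
  · exact hxy ▸ hx
  · obtain ⟨n, c, hc0, hcl, hpos⟩ := hconn x y hxy
    have key : ∀ i : Fin (n + 1), c i ∈ S := by
      intro i
      induction i using Fin.induction with
      | zero => exact hc0 ▸ hx
      | succ i ih => exact hclosed _ ih _ (hpos i)
    exact hcl ▸ key (Fin.last n)

lemma integrand_cont {F : ℝ → ℝ} (hF : ContinuousOn F (Set.Ici 0)) :
    Continuous (fun s : ℝ => 2 * s * F (s ^ 2)) := by
  rw [← continuousOn_univ]
  apply ContinuousOn.mul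
  · exact (continuous_const.mul continuous_id).continuousOn
  · exact hF.comp (continuous_pow 2).continuousOn (fun s _ => sq_nonneg s)

lemma primFun_one (F : ℝ → ℝ) : primFun F 1 = 0 := by
  simp [primFun, Real.sqrt_one]

lemma primFun_sub_eq {F : ℝ → ℝ} (hF : ContinuousOn F (Set.Ici 0)) (t1 t2 : ℝ) :
    primFun F t1 - primFun F t2 = ∫ s in Real.sqrt t1..Real.sqrt t2, 2 * s * F (s ^ 2) := by
  have hc := integrand_cont hF
  have hi : ∀ a b : ℝ, IntervalIntegrable (fun s => 2 * s * F (s ^ 2)) MeasureTheory.volume a b :=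
    fun a b => hc.intervalIntegrable a b
  have h := intervalIntegral.integral_add_adjacent_intervals
    (a := Real.sqrt t1) (b := Real.sqrt t2) (c := 1)
    (f := fun s => 2 * s * F (s ^ 2)) (hi _ _) (hi _ _)
  simp only [primFun]
  linarith [h]

lemma interval_nonneg {F : ℝ → ℝ} (hFpos : ∀ s, 0 ≤ s → 0 < F s) {a b : ℝ}
    (ha : 0 ≤ a) (hab : a ≤ b) :
    0 ≤ ∫ s in a..b, 2 * s * F (s ^ 2) := by
  apply intervalIntegral.integral_nonneg hab
  intro s hs
  have hs0 : 0 ≤ s := le_trans ha hs.1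
  have := hFpos (s ^ 2) (sq_nonneg s)
  positivity

lemma interval_le {F : ℝ → ℝ} (hF : ContinuousOn F (Set.Ici 0))
    (hFpos : ∀ s, 0 ≤ s → 0 < F s) (hFmono : MonotoneOn F (Set.Ici 0)) {a b : ℝ}
    (ha : 0 ≤ a) (hab : a ≤ b) (hb : b ≤ 1) :
    (∫ s in a..b, 2 * s * F (s ^ 2)) ≤ F 1 * (b ^ 2 - a ^ 2) := by
  have hc := integrand_cont hF
  have h1 : (∫ s in a..b, 2 * s * F (s ^ 2)) ≤ ∫ s in a..b, 2 * F 1 * s := by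
    apply intervalIntegral.integral_mono_on hab (hc.intervalIntegrable _ _)
      ((by continuity : Continuous fun s : ℝ => 2 * F 1 * s).intervalIntegrable _ _)
    intro s hs
    have hs0 : 0 ≤ s := le_trans ha hs.1
    have hFle : F (s ^ 2) ≤ F 1 := by
      apply hFmono (Set.mem_Ici.mpr (sq_nonneg s)) (Set.mem_Ici.mpr zero_le_one)
      nlinarith [hs.2]
    nlinarith [le_of_lt (hFpos (s ^ 2) (sq_nonneg s))]
  have h2 : (∫ s in a..b, 2 * F 1 * s) = F 1 * (b ^ 2 - a ^ 2) := by
    rw [intervalIntegral.integral_const_mul, integral_id]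
    ring
  linarith

lemma primFun_nonneg {F : ℝ → ℝ} (hF : ContinuousOn F (Set.Ici 0))
    (hFpos : ∀ s, 0 ≤ s → 0 < F s) {t : ℝ} (ht : 0 ≤ t) (ht1 : t ≤ 1) :
    0 ≤ primFun F t := by
  have h := primFun_sub_eq hF t 1
  rw [primFun_one, Real.sqrt_one, sub_zero] at h
  rw [h]
  exact interval_nonneg hFpos (Real.sqrt_nonneg t) (by
    nlinarith [Real.sqrt_le_sqrt ht1, Real.sqrt_one])

lemma primFun_nonpos {F : ℝ → ℝ} (hF : ContinuousOn F (Set.Ici 0))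
    (hFpos : ∀ s, 0 ≤ s → 0 < F s) {t : ℝ} (ht : 1 ≤ t) :
    primFun F t ≤ 0 := by
  have h := primFun_sub_eq hF 1 t
  rw [primFun_one, Real.sqrt_one] at h
  have h2 : 0 ≤ ∫ s in (1:ℝ)..Real.sqrt t, 2 * s * F (s ^ 2) :=
    interval_nonneg hFpos zero_le_one (by
      nlinarith [Real.sqrt_le_sqrt ht, Real.sqrt_one])
  linarith

lemma primFun_diff_le {F : ℝ → ℝ} (hF : ContinuousOn F (Set.Ici 0))
    (hFpos : ∀ s, 0 ≤ s → 0 < F s) (hFmono : MonotoneOn F (Set.Ici 0)) {t1 t2 : ℝ}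
    (ht1 : 0 ≤ t1) (h12 : t1 ≤ t2) (ht2 : t2 ≤ 1) :
    primFun F t1 - primFun F t2 ≤ F 1 * (t2 - t1) := by
  rw [primFun_sub_eq hF t1 t2]
  have := interval_le hF hFpos hFmono (Real.sqrt_nonneg t1)
    (Real.sqrt_le_sqrt h12) (by nlinarith [Real.sqrt_le_sqrt ht2, Real.sqrt_one])
  rwa [Real.sq_sqrt (le_trans ht1 h12), Real.sq_sqrt ht1] at this

lemma primFun_diff_nonneg {F : ℝ → ℝ} (hF : ContinuousOn F (Set.Ici 0))
    (hFpos : ∀ s, 0 ≤ s → 0 < F s) {t1 t2 : ℝ}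
    (ht1 : 0 ≤ t1) (h12 : t1 ≤ t2) :
    0 ≤ primFun F t1 - primFun F t2 := by
  rw [primFun_sub_eq hF t1 t2]
  exact interval_nonneg hFpos (Real.sqrt_nonneg t1) (Real.sqrt_le_sqrt h12)

lemma base_lemma {V : Type*} [Fintype V] [DecidableEq V] [Nonempty V] {ω : V → V → ℝ}
    {μ : V → ℝ}
    (hω : ∀ x y, 0 ≤ ω x y) (hμ : ∀ x, 0 < μ x)
    (hconn : ∀ x y : V, x ≠ y → ∃ (n : ℕ) (c : Fin (n + 1) → V),
      c 0 = x ∧ c (Fin.last n) = y ∧ ∀ i : Fin n, 0 < ω (c i.castSucc) (c i.succ))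
    {F : ℝ → ℝ} (hF : ContinuousOn F (Set.Ici 0)) (hFpos : ∀ s, 0 ≤ s → 0 < F s)
    (w a : V → ℝ) (ha : ∀ x, 0 < a x) (p : V) {ε : ℝ} (hε : 0 < ε)
    (hw : ∀ x, -(a x) * primFun F (Real.exp (w x)) + (if x = p then ε else 0)
      ≤ graphLap ω μ w x) :
    ∀ x, w x < 0 := by
  obtain ⟨x₀, hmax⟩ := exists_max w
  suffices hs : w x₀ < 0 by intro x; exact lt_of_le_of_lt (hmax x) hs
  by_contra hM
  push_neg at hM
  set S : Set V := {y | w x₀ ≤ w y} with hSdef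
  have hmem : ∀ y ∈ S, w y = w x₀ := fun y hy => le_antisymm (hmax y) hy
  have hRHS_nonneg : ∀ x ∈ S, 0 ≤ -(a x) * primFun F (Real.exp (w x)) := by
    intro x hx
    have hwx : w x = w x₀ := hmem x hx
    have h1 : (1:ℝ) ≤ Real.exp (w x) := Real.one_le_exp (hwx ▸ hM)
    have h2 : primFun F (Real.exp (w x)) ≤ 0 := primFun_nonpos hF hFpos h1
    nlinarith [ha x]
  have hclosed : ∀ x ∈ S, ∀ b, 0 < ω x b → b ∈ S := by
    intro x hx b hb
    have hmaxx : ∀ y, w y ≤ w x := fun y => (hmem x hx) ▸ hmax y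
    have hle : graphLap ω μ w x ≤ 0 := graphLap_nonpos_at_max hω hμ w x hmaxx
    have hge : 0 ≤ graphLap ω μ w x := by
      have := hw x
      have h0 : (0:ℝ) ≤ (if x = p then ε else 0) := by
        by_cases h : x = p <;> simp [h, le_of_lt hε]
      linarith [hRHS_nonneg x hx]
    have heq : graphLap ω μ w x = 0 := le_antisymm hle hge
    have hsum : ∑ y, ω x y * (w y - w x) = 0 := by
      have hμx : (1 / μ x) ≠ 0 := by have := hμ x; positivity
      have := heq
      simp only [graphLap] at this
      exact (mul_eq_zero.mp this).resolve_left hμx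
    have hterm : ω x b * (w b - w x) = 0 := by
      have hnp : ∀ y ∈ Finset.univ, ω x y * (w y - w x) ≤ 0 := by
        intro y _
        exact mul_nonpos_of_nonneg_of_nonpos (hω x y) (by linarith [hmaxx y])
      exact (Finset.sum_eq_zero_iff_of_nonpos hnp).mp hsum b (Finset.mem_univ b)
    have : w b = w x := by
      rcases mul_eq_zero.mp hterm with h | h
      · exact absurd h (ne_of_gt hb)
      · linarith
    exact hSdef ▸ Set.mem_setOf.mpr (by rw [this, hmem x hx])
  have hall : ∀ y, y ∈ S := conn_reach hconn S hclosed (Set.mem_setOf.mpr (le_refl _))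
  have hconst : ∀ y, w y = w x₀ := fun y => hmem y (hall y)
  have hlap0 : graphLap ω μ w p = 0 := by
    simp only [graphLap]
    have : ∑ y, ω p y * (w y - w p) = 0 := by
      apply Finset.sum_eq_zero
      intro y _
      rw [hconst y, hconst p]
      ring
    rw [this, mul_zero]
  have h1 := hw p
  rw [if_pos rfl, hlap0] at h1
  have := hRHS_nonneg p (hall p)
  linarith

lemma key_bound {lam K C1 C2 A g s : ℝ} (hlam : 0 < lam) (hK : lam * C1 * C2 < K)
    (hC1 : 0 < C1) (hC2 : 0 < C2) (hA : 0 < A) (hA1 : A ≤ C2) (hg0 : 0 ≤ g)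
    (hg : g ≤ C1 * (-s)) (hs : s ≤ 0) : lam * A * g ≤ K * (-s) := by
  nlinarith [mul_nonneg (mul_nonneg hlam.le (sub_nonneg.mpr hA1)) hg0,
    mul_nonneg (mul_nonneg hlam.le hC2.le) (sub_nonneg.mpr hg),
    mul_nonneg (sub_nonneg.mpr hK.le) (neg_nonneg.mpr hs)]

lemma key_bound2 {lam K C1 C2 AL An gL gn d : ℝ} (hlam : 0 < lam) (hK : lam * C1 * C2 < K)
    (hC1 : 0 < C1) (hC2 : 0 < C2) (hAL : 0 < AL) (hAL1 : AL ≤ C2) (hALn : AL ≤ An)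
    (hgn : 0 ≤ gn) (hdiff0 : 0 ≤ gL - gn) (hdiff : gL - gn ≤ C1 * d) (hd : 0 < d) :
    lam * AL * gL - lam * An * gn < K * d := by
  nlinarith [mul_nonneg (mul_nonneg hlam.le (sub_nonneg.mpr hAL1)) hdiff0,
    mul_nonneg (mul_nonneg hlam.le hC2.le) (sub_nonneg.mpr hdiff),
    mul_nonneg (mul_nonneg hlam.le (sub_nonneg.mpr hALn)) hgn,
    mul_pos (sub_pos.mpr hK) hd,
    mul_nonneg (mul_nonneg hlam.le hAL.le) hdiff0]

end Helpers

theorem stmt_4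
    {V : Type*} [Fintype V] [DecidableEq V]
    (hV : 1 < Fintype.card V)
    (ω : V → V → ℝ) (μ : V → ℝ)
    (hω_nonneg : ∀ x y, 0 ≤ ω x y)
    (hω_symm : ∀ x y, ω x y = ω y x)
    (hω_diag : ∀ x, ω x x = 0)
    (hconn : ∀ x y : V, x ≠ y → ∃ (n : ℕ) (c : Fin (n + 1) → V),
      c 0 = x ∧ c (Fin.last n) = y ∧ ∀ i : Fin n, 0 < ω (c i.castSucc) (c i.succ))
    (hμ : ∀ x, 0 < μ x)
    (G H : ℝ → ℝ)
    (hGpos : ∀ s, 0 ≤ s → 0 < G s) (hHpos : ∀ s, 0 ≤ s → 0 < H s)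
    (hGmono : StrictMonoOn G (Set.Ici 0)) (hHmono : StrictMonoOn H (Set.Ici 0))
    (hGsmooth : ContDiffOn ℝ (⊤ : ℕ∞) G (Set.Ici 0)) (hHsmooth : ContDiffOn ℝ (⊤ : ℕ∞) H (Set.Ici 0))
    (N1 N2 : ℕ) (hN1 : 0 < N1) (hN2 : 0 < N2)
    (p1 : Fin N1 → V) (p2 : Fin N2 → V)
    (u₀ v₀ : V → ℝ)
    (hu₀ : ∀ x, graphLap ω μ u₀ x =
      -(4 * Real.pi * N1) / graphVol μ + 4 * Real.pi * ∑ j, diracDelta μ (p1 j) x)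
    (hv₀ : ∀ x, graphLap ω μ v₀ x =
      -(4 * Real.pi * N2) / graphVol μ + 4 * Real.pi * ∑ j, diracDelta μ (p2 j) x)
    (lam K : ℝ) (hlam : 0 < lam) (hK : lam * G 1 * H 1 < K)
    (u v : ℕ → V → ℝ)
    (hu1 : u 1 = fun x => -u₀ x) (hv1 : v 1 = fun x => -v₀ x)
    (hiter_u : ∀ n, 1 ≤ n → ∀ x, graphLap ω μ (u (n + 1)) x - K * u (n + 1) x =
      -lam * Real.exp (v₀ x + v n x) * H (Real.exp (v₀ x + v n x)) *
        primFun G (Real.exp (u₀ x + u n x)) - K * u n x + 4 * Real.pi * N1 / graphVol μ)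
    (hiter_v : ∀ n, 1 ≤ n → ∀ x, graphLap ω μ (v (n + 1)) x - K * v (n + 1) x =
      -lam * Real.exp (u₀ x + u n x) * G (Real.exp (u₀ x + u n x)) *
        primFun H (Real.exp (v₀ x + v n x)) - K * v n x + 4 * Real.pi * N2 / graphVol μ)
    (uLow vLow : V → ℝ) (hlow : isLowerSolution ω μ G H N1 N2 u₀ v₀ lam uLow vLow) :
    ∀ n, 1 ≤ n → ∀ x, uLow x < u n x ∧ vLow x < v n x := by
  have hNV : Nonempty V := Fintype.card_pos_iff.mp (by omega)
  have hGcont : ContinuousOn G (Set.Ici 0) := hGsmooth.continuousOn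
  have hHcont : ContinuousOn H (Set.Ici 0) := hHsmooth.continuousOn
  have hGm : MonotoneOn G (Set.Ici 0) := hGmono.monotoneOn
  have hHm : MonotoneOn H (Set.Ici 0) := hHmono.monotoneOn
  have hG1 : 0 < G 1 := hGpos 1 zero_le_one
  have hH1 : 0 < H 1 := hHpos 1 zero_le_one
  have hK0 : 0 < K := lt_trans (by positivity) hK
  have hK' : lam * H 1 * G 1 < K := by
    rw [show lam * H 1 * G 1 = lam * G 1 * H 1 from by ring]; exact hK
  have hπ : (0:ℝ) < Real.pi := Real.pi_pos
  -- dirac delta facts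
  have hd_nonneg : ∀ (q x : V), 0 ≤ diracDelta μ q x := by
    intro q x
    unfold diracDelta
    split
    · have := hμ q; positivity
    · exact le_refl 0
  have hdsum1 : ∀ x, 0 ≤ ∑ j, diracDelta μ (p1 j) x :=
    fun x => Finset.sum_nonneg fun j _ => hd_nonneg _ _
  have hdsum2 : ∀ x, 0 ≤ ∑ j, diracDelta μ (p2 j) x :=
    fun x => Finset.sum_nonneg fun j _ => hd_nonneg _ _
  -- exp-coefficient facts
  have hAH_pos : ∀ b : ℝ, 0 < Real.exp b * H (Real.exp b) :=
    fun b => mul_pos (Real.exp_pos b) (hHpos _ (Real.exp_pos b).le)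
  have hAG_pos : ∀ b : ℝ, 0 < Real.exp b * G (Real.exp b) :=
    fun b => mul_pos (Real.exp_pos b) (hGpos _ (Real.exp_pos b).le)
  have hAH_mono : ∀ b1 b2 : ℝ, b1 ≤ b2 →
      Real.exp b1 * H (Real.exp b1) ≤ Real.exp b2 * H (Real.exp b2) := by
    intro b1 b2 h12
    apply mul_le_mul (Real.exp_le_exp.mpr h12)
      (hHm (Set.mem_Ici.mpr (Real.exp_pos b1).le) (Set.mem_Ici.mpr (Real.exp_pos b2).le)
        (Real.exp_le_exp.mpr h12))
      (hHpos _ (Real.exp_pos b1).le).le (Real.exp_pos b2).le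
  have hAG_mono : ∀ b1 b2 : ℝ, b1 ≤ b2 →
      Real.exp b1 * G (Real.exp b1) ≤ Real.exp b2 * G (Real.exp b2) := by
    intro b1 b2 h12
    apply mul_le_mul (Real.exp_le_exp.mpr h12)
      (hGm (Set.mem_Ici.mpr (Real.exp_pos b1).le) (Set.mem_Ici.mpr (Real.exp_pos b2).le)
        (Real.exp_le_exp.mpr h12))
      (hGpos _ (Real.exp_pos b1).le).le (Real.exp_pos b2).le
  have hAH_le : ∀ b : ℝ, b ≤ 0 → Real.exp b * H (Real.exp b) ≤ H 1 := by
    intro b hb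
    have := hAH_mono b 0 hb
    simpa [Real.exp_zero] using this
  have hAG_le : ∀ b : ℝ, b ≤ 0 → Real.exp b * G (Real.exp b) ≤ G 1 := by
    intro b hb
    have := hAG_mono b 0 hb
    simpa [Real.exp_zero] using this
  -- primFun bounds
  have hg_bounds : ∀ s : ℝ, s ≤ 0 →
      0 ≤ primFun G (Real.exp s) ∧ primFun G (Real.exp s) ≤ G 1 * (-s) := by
    intro s hs
    have he1 : Real.exp s ≤ 1 := Real.exp_le_one_iff.mpr hs
    have he0 : (0:ℝ) ≤ Real.exp s := (Real.exp_pos s).le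
    refine ⟨primFun_nonneg hGcont hGpos he0 he1, ?_⟩
    have h1 := primFun_diff_le hGcont hGpos hGm he0 he1 le_rfl
    rw [primFun_one] at h1
    have h2 : 1 - Real.exp s ≤ -s := by linarith [Real.add_one_le_exp s]
    nlinarith
  have hh_bounds : ∀ s : ℝ, s ≤ 0 →
      0 ≤ primFun H (Real.exp s) ∧ primFun H (Real.exp s) ≤ H 1 * (-s) := by
    intro s hs
    have he1 : Real.exp s ≤ 1 := Real.exp_le_one_iff.mpr hs
    have he0 : (0:ℝ) ≤ Real.exp s := (Real.exp_pos s).le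
    refine ⟨primFun_nonneg hHcont hHpos he0 he1, ?_⟩
    have h1 := primFun_diff_le hHcont hHpos hHm he0 he1 le_rfl
    rw [primFun_one] at h1
    have h2 : 1 - Real.exp s ≤ -s := by linarith [Real.add_one_le_exp s]
    nlinarith
  have hg_diff : ∀ s1 s2 : ℝ, s1 ≤ s2 → s2 ≤ 0 →
      0 ≤ primFun G (Real.exp s1) - primFun G (Real.exp s2) ∧
      primFun G (Real.exp s1) - primFun G (Real.exp s2) ≤ G 1 * (s2 - s1) := by
    intro s1 s2 h12 hs2
    have he12 : Real.exp s1 ≤ Real.exp s2 := Real.exp_le_exp.mpr h12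
    have he2 : Real.exp s2 ≤ 1 := Real.exp_le_one_iff.mpr hs2
    have he0 : (0:ℝ) ≤ Real.exp s1 := (Real.exp_pos s1).le
    refine ⟨primFun_diff_nonneg hGcont hGpos he0 he12, ?_⟩
    have h1 := primFun_diff_le hGcont hGpos hGm he0 he12 he2
    have h2 : Real.exp s2 - Real.exp s1 ≤ s2 - s1 := exp_lip h12 hs2
    nlinarith
  have hh_diff : ∀ s1 s2 : ℝ, s1 ≤ s2 → s2 ≤ 0 →
      0 ≤ primFun H (Real.exp s1) - primFun H (Real.exp s2) ∧
      primFun H (Real.exp s1) - primFun H (Real.exp s2) ≤ H 1 * (s2 - s1) := by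
    intro s1 s2 h12 hs2
    have he12 : Real.exp s1 ≤ Real.exp s2 := Real.exp_le_exp.mpr h12
    have he2 : Real.exp s2 ≤ 1 := Real.exp_le_one_iff.mpr hs2
    have he0 : (0:ℝ) ≤ Real.exp s1 := (Real.exp_pos s1).le
    refine ⟨primFun_diff_nonneg hHcont hHpos he0 he12, ?_⟩
    have h1 := primFun_diff_le hHcont hHpos hHm he0 he12 he2
    have h2 : Real.exp s2 - Real.exp s1 ≤ s2 - s1 := exp_lip h12 hs2
    nlinarith
  -- normalized Laplacian equations for u₀, v₀
  have hu₀' : ∀ x, graphLap ω μ u₀ x =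
      -(4 * Real.pi * N1 / graphVol μ) + 4 * Real.pi * ∑ j, diracDelta μ (p1 j) x := by
    intro x; rw [hu₀ x, neg_div]
  have hv₀' : ∀ x, graphLap ω μ v₀ x =
      -(4 * Real.pi * N2 / graphVol μ) + 4 * Real.pi * ∑ j, diracDelta μ (p2 j) x := by
    intro x; rw [hv₀ x, neg_div]
  -- base inequalities for the lower solution
  have hbase_u : ∀ x, u₀ x + uLow x < 0 := by
    set q : V := p1 ⟨0, hN1⟩ with hq
    have hεpos : (0:ℝ) < 4 * Real.pi * (1 / μ q) := by have := hμ q; positivity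
    refine base_lemma hω_nonneg hμ hconn hGcont hGpos (fun x => u₀ x + uLow x)
      (fun x => lam * (Real.exp (v₀ x + vLow x) * H (Real.exp (v₀ x + vLow x))))
      (fun x => mul_pos hlam (hAH_pos _)) q hεpos ?_
    intro x
    beta_reduce
    have h1 := (hlow x).1
    have h2 := hu₀' x
    have h3 := graphLap_add ω μ u₀ uLow x
    have h4 : diracDelta μ q x ≤ ∑ j, diracDelta μ (p1 j) x :=
      Finset.single_le_sum (fun j _ => hd_nonneg (p1 j) x) (Finset.mem_univ _)
    have h4' : 4 * Real.pi * diracDelta μ q x ≤ 4 * Real.pi * ∑ j, diracDelta μ (p1 j) x :=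
      mul_le_mul_of_nonneg_left h4 (by positivity)
    have h6 : (if x = q then 4 * Real.pi * (1 / μ q) else 0)
        = 4 * Real.pi * diracDelta μ q x := by
      unfold diracDelta; split <;> ring
    have h7 : -(lam * (Real.exp (v₀ x + vLow x) * H (Real.exp (v₀ x + vLow x)))) *
        primFun G (Real.exp (u₀ x + uLow x))
        = -lam * Real.exp (v₀ x + vLow x) * H (Real.exp (v₀ x + vLow x)) *
          primFun G (Real.exp (u₀ x + uLow x)) := by ring
    rw [h6, h7]
    linarith
  have hbase_v : ∀ x, v₀ x + vLow x < 0 := by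
    set q : V := p2 ⟨0, hN2⟩ with hq
    have hεpos : (0:ℝ) < 4 * Real.pi * (1 / μ q) := by have := hμ q; positivity
    refine base_lemma hω_nonneg hμ hconn hHcont hHpos (fun x => v₀ x + vLow x)
      (fun x => lam * (Real.exp (u₀ x + uLow x) * G (Real.exp (u₀ x + uLow x))))
      (fun x => mul_pos hlam (hAG_pos _)) q hεpos ?_
    intro x
    beta_reduce
    have h1 := (hlow x).2
    have h2 := hv₀' x
    have h3 := graphLap_add ω μ v₀ vLow x
    have h4 : diracDelta μ q x ≤ ∑ j, diracDelta μ (p2 j) x :=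
      Finset.single_le_sum (fun j _ => hd_nonneg (p2 j) x) (Finset.mem_univ _)
    have h4' : 4 * Real.pi * diracDelta μ q x ≤ 4 * Real.pi * ∑ j, diracDelta μ (p2 j) x :=
      mul_le_mul_of_nonneg_left h4 (by positivity)
    have h6 : (if x = q then 4 * Real.pi * (1 / μ q) else 0)
        = 4 * Real.pi * diracDelta μ q x := by
      unfold diracDelta; split <;> ring
    have h7 : -(lam * (Real.exp (u₀ x + uLow x) * G (Real.exp (u₀ x + uLow x)))) *
        primFun H (Real.exp (v₀ x + vLow x))
        = -lam * Real.exp (u₀ x + uLow x) * G (Real.exp (u₀ x + uLow x)) *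
          primFun H (Real.exp (v₀ x + vLow x)) := by ring
    rw [h6, h7]
    linarith
  -- main induction
  have key : ∀ n, 1 ≤ n → ∀ x,
      (u₀ x + u n x ≤ 0 ∧ v₀ x + v n x ≤ 0) ∧ (uLow x < u n x ∧ vLow x < v n x) := by
    intro n hn
    induction n, hn using Nat.le_induction with
    | base =>
      intro x
      have h1 : u 1 x = -u₀ x := by rw [hu1]
      have h2 : v 1 x = -v₀ x := by rw [hv1]
      refine ⟨⟨by rw [h1]; linarith, by rw [h2]; linarith⟩,
        ⟨by rw [h1]; linarith [hbase_u x], by rw [h2]; linarith [hbase_v x]⟩⟩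
    | succ n hn ih =>
      have hstepa_u : ∀ x, u₀ x + u (n + 1) x ≤ 0 := by
        have := maxpr_weak hω_nonneg hμ hK0 (fun x => u₀ x + u (n + 1) x) ?_
        · intro x; linarith [this x]
        intro x
        have hit := hiter_u n hn x
        have hlapadd := graphLap_add ω μ u₀ (u (n + 1)) x
        have hu0x := hu₀' x
        have hsn : u₀ x + u n x ≤ 0 := (ih x).1.1
        have hbn : v₀ x + v n x ≤ 0 := (ih x).1.2
        have hg := hg_bounds _ hsn
        have hA := hAH_le _ hbn
        have hApos := hAH_pos (v₀ x + v n x)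
        have hδ : (0:ℝ) ≤ 4 * Real.pi * ∑ j, diracDelta μ (p1 j) x :=
          mul_nonneg (by positivity) (hdsum1 x)
        have hb := key_bound hlam hK hG1 hH1 hApos hA hg.1 hg.2 hsn
        have hb' : lam * (Real.exp (v₀ x + v n x) * H (Real.exp (v₀ x + v n x))) *
            primFun G (Real.exp (u₀ x + u n x)) ≤ K * (-(u₀ x + u n x)) := hb
        beta_reduce
        linarith [hb', hδ, hit, hlapadd, hu0x]
      have hstepa_v : ∀ x, v₀ x + v (n + 1) x ≤ 0 := by
        have := maxpr_weak hω_nonneg hμ hK0 (fun x => v₀ x + v (n + 1) x) ?_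
        · intro x; linarith [this x]
        intro x
        have hit := hiter_v n hn x
        have hlapadd := graphLap_add ω μ v₀ (v (n + 1)) x
        have hv0x := hv₀' x
        have hsn : u₀ x + u n x ≤ 0 := (ih x).1.1
        have hbn : v₀ x + v n x ≤ 0 := (ih x).1.2
        have hg := hh_bounds _ hbn
        have hA := hAG_le _ hsn
        have hApos := hAG_pos (u₀ x + u n x)
        have hδ : (0:ℝ) ≤ 4 * Real.pi * ∑ j, diracDelta μ (p2 j) x :=
          mul_nonneg (by positivity) (hdsum2 x)
        have hb := key_bound hlam hK' hH1 hG1 hApos hA hg.1 hg.2 hbn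
        have hb' : lam * (Real.exp (u₀ x + u n x) * G (Real.exp (u₀ x + u n x))) *
            primFun H (Real.exp (v₀ x + v n x)) ≤ K * (-(v₀ x + v n x)) := hb
        beta_reduce
        linarith [hb', hδ, hit, hlapadd, hv0x]
      have hstepb_u : ∀ x, uLow x - u (n + 1) x < 0 := by
        apply maxpr_strict hω_nonneg hμ hK0 (fun x => uLow x - u (n + 1) x)
        intro x
        have hit := hiter_u n hn x
        have hlapsub := graphLap_sub ω μ uLow (u (n + 1)) x
        have hlowx := (hlow x).1
        have hsn : u₀ x + u n x ≤ 0 := (ih x).1.1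
        have hbn : v₀ x + v n x ≤ 0 := (ih x).1.2
        have hdlt : uLow x < u n x := (ih x).2.1
        have hvlt : vLow x < v n x := (ih x).2.2
        have hsL : u₀ x + uLow x < 0 := hbase_u x
        have hbL : v₀ x + vLow x < 0 := hbase_v x
        have hgd := hg_diff (u₀ x + uLow x) (u₀ x + u n x) (by linarith) hsn
        have hALn := hAH_mono (v₀ x + vLow x) (v₀ x + v n x) (by linarith)
        have hAL1 := hAH_le (v₀ x + vLow x) hbL.le
        have hALpos := hAH_pos (v₀ x + vLow x)
        have hgn0 := (hg_bounds _ hsn).1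
        have hd : (0:ℝ) < u n x - uLow x := by linarith
        have hgd2 : primFun G (Real.exp (u₀ x + uLow x)) - primFun G (Real.exp (u₀ x + u n x))
            ≤ G 1 * (u n x - uLow x) := by
          have := hgd.2
          have he : u₀ x + u n x - (u₀ x + uLow x) = u n x - uLow x := by ring
          rw [he] at this
          exact this
        have hb2 := key_bound2 hlam hK hG1 hH1 hALpos hAL1 hALn hgn0 hgd.1 hgd2 hd
        linarith [hb2, hit, hlapsub, hlowx]
      have hstepb_v : ∀ x, vLow x - v (n + 1) x < 0 := by
        apply maxpr_strict hω_nonneg hμ hK0 (fun x => vLow x - v (n + 1) x)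
        intro x
        have hit := hiter_v n hn x
        have hlapsub := graphLap_sub ω μ vLow (v (n + 1)) x
        have hlowx := (hlow x).2
        have hsn : u₀ x + u n x ≤ 0 := (ih x).1.1
        have hbn : v₀ x + v n x ≤ 0 := (ih x).1.2
        have hdlt : uLow x < u n x := (ih x).2.1
        have hvlt : vLow x < v n x := (ih x).2.2
        have hsL : u₀ x + uLow x < 0 := hbase_u x
        have hbL : v₀ x + vLow x < 0 := hbase_v x
        have hgd := hh_diff (v₀ x + vLow x) (v₀ x + v n x) (by linarith) hbn
        have hALn := hAG_mono (u₀ x + uLow x) (u₀ x + u n x) (by linarith)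
        have hAL1 := hAG_le (u₀ x + uLow x) hsL.le
        have hALpos := hAG_pos (u₀ x + uLow x)
        have hgn0 := (hh_bounds _ hbn).1
        have hd : (0:ℝ) < v n x - vLow x := by linarith
        have hgd2 : primFun H (Real.exp (v₀ x + vLow x)) - primFun H (Real.exp (v₀ x + v n x))
            ≤ H 1 * (v n x - vLow x) := by
          have := hgd.2
          have he : v₀ x + v n x - (v₀ x + vLow x) = v n x - vLow x := by ring
          rw [he] at this
          exact this
        have hb2 := key_bound2 hlam hK' hH1 hG1 hALpos hAL1 hALn hgn0 hgd.1 hgd2 hd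
        linarith [hb2, hit, hlapsub, hlowx]
      intro x
      exact ⟨⟨hstepa_u x, hstepa_v x⟩,
        ⟨by linarith [hstepb_u x], by linarith [hstepb_v x]⟩⟩
  intro n hn x
  exact (key n hn x).2
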